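/- Let f be real analytic near O with f(O) = 0 and leading homogeneous part f_p of degree p ≥ 2 (i.e. f = f_p + f_{p+1} + … is the Taylor expansion at O into homogeneous parts, with f_p ≠ 0). Let γ be a half-trajectory of the unit gradient field of f with f negative and increasing along γ and γ(s) → O, and let ν be its limit of secants. Then ν is an eigen-vector of Hs(f_p)(ν): there exists λ ∈ ℝ with Hs(f_p)(ν)·ν = λ·ν. -/

import Mathlib

/-!
Write `u = γ / ‖γ‖` and let `T(x) = ∇f_p(x) - ⟪∇f_p(x), x⟫ x` be the spherical gradient of `f_p`,
so that `d/ds f_p(u(s)) = ⟪T(u), γ'⟫ / ‖γ‖`. Since `f - f_p = O(‖x‖^(p+1))`, also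
`∇f - ∇f_p = O(‖x‖^p)`, while `∇f_p(x) = ‖x‖^(p-1) ∇f_p(u)` by homogeneity; hence the direction
`γ' = ∇f / ‖∇f‖` is asymptotic to that of `∇f_p(u)`. If `T(ν) ≠ 0`, then `⟪T(u), γ'⟫` tends to
`‖T(ν)‖² / ‖∇f_p(ν)‖ > 0`, and as `γ` has unit speed, `‖γ(s)‖ ≤ L - s`. So `f_p(u(s))` grows at
least like `-c log (L - s)` for some `c > 0`, contradicting `f_p(u(s)) → f_p(ν)`. Thus `∇f_p(ν)`
is parallel to `ν`, and Euler's identity for the `(p-1)`-homogeneous `∇f_p` gives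
`Hs(f_p)(ν) ν = (p-1) ∇f_p(ν)`.
-/

open scoped RealInnerProductSpace Topology
open Filter Asymptotics Set InnerProductSpace

section Analytic

variable {𝕜 E F : Type*} [NontriviallyNormedField 𝕜] [NormedAddCommGroup E] [NormedSpace 𝕜 E]
  [NormedAddCommGroup F] [NormedSpace 𝕜 F]

namespace FormalMultilinearSeries

/-- Formal multilinear series need not be symmetric, so `q j` vanishing on the diagonal does not
make `q j` zero; once this holds for all `j ≤ p`, `q.zeroUpTo p` still represents the same
function. -/
noncomputable def zeroUpTo (q : FormalMultilinearSeries 𝕜 E F) (p : ℕ) :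
    FormalMultilinearSeries 𝕜 E F :=
  fun j => if j ≤ p then 0 else q j

theorem zeroUpTo_of_le (q : FormalMultilinearSeries 𝕜 E F) {p j : ℕ} (hj : j ≤ p) :
    q.zeroUpTo p j = 0 :=
  if_pos hj

theorem zeroUpTo_of_lt (q : FormalMultilinearSeries 𝕜 E F) {p j : ℕ} (hj : p < j) :
    q.zeroUpTo p j = q j :=
  if_neg hj.not_ge

theorem radius_le_radius_zeroUpTo (q : FormalMultilinearSeries 𝕜 E F) (p : ℕ) :
    q.radius ≤ (q.zeroUpTo p).radius :=
  radius_le_of_le fun j => by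
    rcases le_or_gt j p with hj | hj
    · simp [zeroUpTo_of_le q hj]
    · rw [zeroUpTo_of_lt q hj]

end FormalMultilinearSeries

open FormalMultilinearSeries

theorem HasFPowerSeriesAt.apply_eq_zero_of_isBigO {h : E → F}
    {q : FormalMultilinearSeries 𝕜 E F} {p : ℕ} (hq : HasFPowerSeriesAt h q 0)
    (hO : h =O[𝓝 0] fun x => ‖x‖ ^ (p + 1)) :
    ∀ j ≤ p, ∀ y : E, (q j fun _ => y) = 0 := by
  intro j
  induction j using Nat.strong_induction_on with
  | _ j ih =>
    intro hjp y
    have hpartial : q.partialSum (j + 1) = fun y => q j fun _ => y := by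
      funext z
      refine Finset.sum_eq_single _ (fun i hi hij => ?_) fun hj => ?_
      · have hi' := Finset.mem_range_succ_iff.mp hi
        exact ih i (hi'.lt_of_ne hij) (hi'.trans hjp) z
      · exact absurd (Finset.mem_range.mpr (lt_add_one j)) hj
    have hrem := hq.isBigO_sub_partialSum_pow (j + 1)
    simp only [zero_add, hpartial] at hrem
    have hpow : (fun x : E => ‖x‖ ^ (p + 1)) =O[𝓝 0] fun x => ‖x‖ ^ (j + 1) := by
      rcases hjp.lt_or_eq with hjp | rfl
      · exact (isLittleO_norm_pow_norm_pow (by omega)).isBigO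
      · exact isBigO_refl _ _
    refine IsBigO.continuousMultilinearMap_apply_eq_zero ?_ y
    simpa using (hO.trans hpow).sub hrem

theorem HasFPowerSeriesOnBall.zeroUpTo {h : E → F} {q : FormalMultilinearSeries 𝕜 E F} {p : ℕ}
    {r : ENNReal} (hq : HasFPowerSeriesOnBall h q 0 r)
    (hdiag : ∀ j ≤ p, ∀ y : E, (q j fun _ => y) = 0) :
    HasFPowerSeriesOnBall h (q.zeroUpTo p) 0 r where
  r_le := hq.r_le.trans (q.radius_le_radius_zeroUpTo p)
  r_pos := hq.r_pos
  hasSum {y} hy := (hq.hasSum hy).congr_fun fun j => by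
    rcases le_or_gt j p with hj | hj
    · simp [zeroUpTo_of_le q hj, hdiag j hj y]
    · rw [zeroUpTo_of_lt q hj]

theorem AnalyticAt.fderiv_isBigO_of_isBigO [CompleteSpace F] {h : E → F} {p : ℕ}
    (hh : AnalyticAt 𝕜 h 0) (hO : h =O[𝓝 0] fun x => ‖x‖ ^ (p + 1)) :
    fderiv 𝕜 h =O[𝓝 0] fun x => ‖x‖ ^ p := by
  obtain ⟨q, r, hq⟩ := hh
  have hder := (hq.zeroUpTo (hq.hasFPowerSeriesAt.apply_eq_zero_of_isBigO hO)).fderiv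
  have hpartial : (q.zeroUpTo p).derivSeries.partialSum p = 0 := by
    funext y
    refine Finset.sum_eq_zero fun k hk => ?_
    rw [derivSeries_eq_zero _ (zeroUpTo_of_le q (by have := Finset.mem_range.mp hk; omega))]
    rfl
  simpa [hpartial] using hder.hasFPowerSeriesAt.isBigO_sub_partialSum_pow p

end Analytic

section NormedSpace

variable {E F : Type*} [NormedAddCommGroup E] [NormedSpace ℝ E]
  [NormedAddCommGroup F] [NormedSpace ℝ F]

theorem fderiv_apply_self_of_homogeneous {g : E → F} {x : E} {k : ℕ}
    (hg : DifferentiableAt ℝ g x) (hom : ∀ᶠ t in 𝓝 (1 : ℝ), g (t • x) = t ^ k • g x) :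
    fderiv ℝ g x x = (k : ℝ) • g x := by
  have hray : HasDerivAt (fun t : ℝ => t • x) x 1 := by
    simpa using (hasDerivAt_id (1 : ℝ)).smul_const x
  have hcomp : HasDerivAt (fun t : ℝ => g (t • x)) (fderiv ℝ g x x) 1 :=
    hg.hasFDerivAt.comp_hasDerivAt_of_eq 1 hray (one_smul ℝ x).symm
  have hpow : HasDerivAt (fun t : ℝ => t ^ k • g x) ((k : ℝ) • g x) 1 := by
    simpa using (hasDerivAt_pow k (1 : ℝ)).smul_const (g x)
  exact hcomp.unique (hpow.congr_of_eventuallyEq hom)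

theorem fderiv_smul_of_homogeneous {g : E → F} {p : ℕ} (hg : Differentiable ℝ g)
    (hom : ∀ (t : ℝ) (x : E), g (t • x) = t ^ p • g x) (hp : 1 ≤ p) {t : ℝ} (ht : t ≠ 0)
    (x : E) : fderiv ℝ g (t • x) = t ^ (p - 1) • fderiv ℝ g x := by
  have hscaled : HasFDerivAt (fun y => g (t • y)) (t • fderiv ℝ g (t • x)) x := by
    have hcomp := (hg (t • x)).hasFDerivAt.comp x ((hasFDerivAt_id x).const_smul t)
    rwa [show (fderiv ℝ g (t • x)).comp (t • ContinuousLinearMap.id ℝ E) =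
      t • fderiv ℝ g (t • x) by ext v; simp] at hcomp
  have hhom : HasFDerivAt (fun y => g (t • y)) (t ^ p • fderiv ℝ g x) x := by
    simpa only [hom] using (hg x).hasFDerivAt.fun_const_smul (t ^ p)
  have hpow : t ^ p = t * t ^ (p - 1) := by rw [← pow_succ', Nat.sub_add_cancel hp]
  apply smul_right_injective _ ht
  simpa only [hpow, mul_smul] using hscaled.unique hhom

theorem norm_normalize_le_one (x : E) : ‖NormedSpace.normalize x‖ ≤ 1 := by
  by_cases hx : x = 0
  · simp [hx]
  · exact (NormedSpace.norm_normalize hx).le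

theorem continuousAt_normalize {x : E} (hx : x ≠ 0) : ContinuousAt NormedSpace.normalize x :=
  (continuous_norm.continuousAt.inv₀ (norm_ne_zero_iff.mpr hx)).smul continuousAt_id

theorem eventually_norm_sub_le_of_tendsto_nhdsLT {γ γ' : ℝ → E} {L C : ℝ} {x : E}
    (hγ : ∀ᶠ t in 𝓝[<] L, HasDerivAt γ (γ' t) t) (hγ' : ∀ᶠ t in 𝓝[<] L, ‖γ' t‖ ≤ C)
    (hlim : Tendsto γ (𝓝[<] L) (𝓝 x)) : ∀ᶠ s in 𝓝[<] L, ‖γ s - x‖ ≤ C * (L - s) := by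
  obtain ⟨a, ha, hsub⟩ := mem_nhdsLT_iff_exists_Ioo_subset.mp (hγ.and hγ')
  filter_upwards [Ioo_mem_nhdsLT ha] with s hs
  have hIco : Ico s L ⊆ Ioo a L := fun t ht => ⟨hs.1.trans_le ht.1, ht.2⟩
  have hlip : ∀ t ∈ Ico s L, ‖γ t - γ s‖ ≤ C * ‖t - s‖ := fun t ht =>
    (convex_Ico s L).norm_image_sub_le_of_norm_hasDerivWithin_le
      (fun y hy => (hsub (hIco hy)).1.hasDerivWithinAt) (fun y hy => (hsub (hIco hy)).2)
      ⟨le_rfl, hs.2⟩ ht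
  have hdist : Tendsto (fun t => C * ‖t - s‖) (𝓝[<] L) (𝓝 (C * ‖L - s‖)) :=
    ((continuous_const.mul (continuous_id.sub continuous_const).norm).tendsto L).mono_left
      nhdsWithin_le_nhds
  have hle := le_of_tendsto_of_tendsto ((hlim.sub_const (γ s)).norm) hdist
    (mem_of_superset (Ico_mem_nhdsLT hs.2) hlip)
  rwa [norm_sub_rev, Real.norm_of_nonneg (sub_nonneg.mpr hs.2.le)] at hle

end NormedSpace

theorem tendsto_sub_nhdsLT_nhdsGT (L : ℝ) : Tendsto (fun t => L - t) (𝓝[<] L) (𝓝[>] 0) :=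
  tendsto_nhdsWithin_iff.mpr
    ⟨by simpa using ((continuous_sub_left L).tendsto L).mono_left nhdsWithin_le_nhds,
      eventually_nhdsWithin_of_forall fun _ ht => mem_Ioi.mpr (sub_pos.mpr ht)⟩

theorem tendsto_atTop_of_div_sub_le_deriv {Φ Φ' : ℝ → ℝ} {K L : ℝ} (hK : 0 < K)
    (hΦ : ∀ᶠ s in 𝓝[<] L, HasDerivAt Φ (Φ' s) s)
    (hΦ' : ∀ᶠ s in 𝓝[<] L, K / (L - s) ≤ Φ' s) : Tendsto Φ (𝓝[<] L) atTop := by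
  obtain ⟨a, ha, hsub⟩ := mem_nhdsLT_iff_exists_Ioo_subset.mp (hΦ.and hΦ')
  set g : ℝ → ℝ := fun t => Φ t + K * Real.log (L - t)
  have hg : ∀ s ∈ Ioo a L, HasDerivAt g (Φ' s - K / (L - s)) s := fun s hs => by
    have hlog := ((hasDerivAt_id s).const_sub L).log (sub_pos.mpr hs.2).ne'
    exact ((hsub hs).1.add (hlog.const_mul K)).congr_deriv (by simp only [id]; ring)
  have hmono : MonotoneOn g (Ioo a L) := by
    refine monotoneOn_of_hasDerivWithinAt_nonneg (f' := fun s => Φ' s - K / (L - s))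
      (convex_Ioo a L) (fun s hs => (hg s hs).continuousAt.continuousWithinAt)
      (fun s hs => ?_) fun s hs => ?_
    all_goals rw [interior_Ioo] at hs
    · exact (hg s hs).hasDerivWithinAt
    · exact sub_nonneg.mpr (hsub hs).2
  have hs₀ : (a + L) / 2 ∈ Ioo a L := ⟨by linarith [mem_Iio.mp ha], by linarith [mem_Iio.mp ha]⟩
  have hlog : Tendsto (fun t => g ((a + L) / 2) - K * Real.log (L - t)) (𝓝[<] L) atTop :=
    tendsto_atTop_add_const_left _ _ <| tendsto_neg_atBot_atTop.comp <|
      (Real.tendsto_log_nhdsGT_zero.comp (tendsto_sub_nhdsLT_nhdsGT L)).const_mul_atBot hK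
  refine tendsto_atTop_mono' _ ?_ hlog
  filter_upwards [Ioo_mem_nhdsLT hs₀.2] with t ht
  have := hmono hs₀ ⟨hs₀.1.trans ht.1, ht.2⟩ ht.1.le
  simp only [g] at this
  linarith

section InnerProductSpace

variable {E : Type*} [NormedAddCommGroup E] [InnerProductSpace ℝ E]

theorem HasDerivAt.norm {γ : ℝ → E} {d : E} {s : ℝ} (hγ : HasDerivAt γ d s) (hne : γ s ≠ 0) :
    HasDerivAt (fun t => ‖γ t‖) ⟪NormedSpace.normalize (γ s), d⟫ s := by
  have hsq := (hγ.norm_sq).sqrt (by positivity)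
  simp only [Real.sqrt_sq (norm_nonneg _)] at hsq
  convert hsq using 1
  rw [NormedSpace.normalize, real_inner_smul_left]
  field_simp

theorem HasDerivAt.normalize {γ : ℝ → E} {d : E} {s : ℝ} (hγ : HasDerivAt γ d s)
    (hne : γ s ≠ 0) :
    HasDerivAt (fun t => NormedSpace.normalize (γ t))
      (‖γ s‖⁻¹ • (d - ⟪NormedSpace.normalize (γ s), d⟫ • NormedSpace.normalize (γ s))) s := by
  have hr : ‖γ s‖ ≠ 0 := norm_ne_zero_iff.mpr hne
  refine (((hγ.norm hne).inv hr).smul hγ).congr_deriv ?_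
  set a := ⟪NormedSpace.normalize (γ s), d⟫
  rw [Pi.inv_apply, NormedSpace.normalize]
  module

variable [CompleteSpace E]

theorem AnalyticOnNhd.gradient {g : E → ℝ} {s : Set E} (hg : AnalyticOnNhd ℝ g s) :
    AnalyticOnNhd ℝ (gradient g) s := fun x hx =>
  (toDual ℝ E).symm.toContinuousLinearEquiv.toContinuousLinearMap.analyticAt _
    |>.comp (hg.fderiv x hx)

theorem norm_gradient (g : E → ℝ) (x : E) : ‖gradient g x‖ = ‖fderiv ℝ g x‖ :=
  (toDual ℝ E).symm.norm_map _

theorem gradient_sub {f g : E → ℝ} {x : E} (hf : DifferentiableAt ℝ f x)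
    (hg : DifferentiableAt ℝ g x) :
    gradient (fun y => f y - g y) x = gradient f x - gradient g x := by
  simp only [gradient, fderiv_fun_sub hf hg, map_sub]

theorem AnalyticAt.gradient_isBigO_of_isBigO {h : E → ℝ} {p : ℕ} (hh : AnalyticAt ℝ h 0)
    (hO : h =O[𝓝 0] fun x => ‖x‖ ^ (p + 1)) : gradient h =O[𝓝 0] fun x => ‖x‖ ^ p := by
  rw [← isBigO_norm_left]
  simpa only [norm_gradient] using (hh.fderiv_isBigO_of_isBigO hO).norm_left

theorem gradient_smul_of_homogeneous {g : E → ℝ} {p : ℕ} (hg : Differentiable ℝ g)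
    (hom : ∀ (t : ℝ) (x : E), g (t • x) = t ^ p * g x) (hp : 1 ≤ p) {t : ℝ} (ht : t ≠ 0)
    (x : E) : gradient g (t • x) = t ^ (p - 1) • gradient g x := by
  simp only [gradient, fderiv_smul_of_homogeneous hg hom hp ht, map_smul]

theorem fderiv_gradient_apply_self_of_homogeneous {g : E → ℝ} {p : ℕ}
    (hg : AnalyticOnNhd ℝ g univ) (hom : ∀ (t : ℝ) (x : E), g (t • x) = t ^ p * g x)
    (hp : 1 ≤ p) (x : E) :
    fderiv ℝ (gradient g) x x = ((p - 1 : ℕ) : ℝ) • gradient g x :=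
  fderiv_apply_self_of_homogeneous (hg.gradient x trivial).differentiableAt <|
    (eventually_ne_nhds one_ne_zero).mono fun _ ht =>
      gradient_smul_of_homogeneous (differentiableOn_univ.mp hg.differentiableOn) hom hp ht x

/-- At a unit vector `x`, the component of `∇g x` tangent to the unit sphere. -/
noncomputable def sphericalGradient (g : E → ℝ) (x : E) : E :=
  gradient g x - ⟪gradient g x, x⟫ • x

theorem inner_sphericalGradient_gradient {g : E → ℝ} {x : E} (hx : ‖x‖ = 1) :
    ⟪sphericalGradient g x, gradient g x⟫ = ‖sphericalGradient g x‖ ^ 2 := by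
  rw [← real_inner_self_eq_norm_sq, sphericalGradient]
  simp only [inner_sub_left, inner_sub_right, real_inner_smul_left, real_inner_smul_right,
    real_inner_self_eq_norm_sq, norm_smul, Real.norm_eq_abs, mul_pow, sq_abs, hx,
    real_inner_comm x]
  ring

theorem continuous_sphericalGradient {g : E → ℝ} (hg : Continuous (gradient g)) :
    Continuous (sphericalGradient g) :=
  hg.sub ((hg.inner continuous_id).smul continuous_id)

theorem HasDerivAt.comp_normalize {g : E → ℝ} {γ : ℝ → E} {d : E} {s : ℝ}
    (hγ : HasDerivAt γ d s) (hg : DifferentiableAt ℝ g (NormedSpace.normalize (γ s)))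
    (hne : γ s ≠ 0) :
    HasDerivAt (fun t => g (NormedSpace.normalize (γ t)))
      (‖γ s‖⁻¹ * ⟪sphericalGradient g (NormedSpace.normalize (γ s)), d⟫) s := by
  refine (hg.hasFDerivAt.comp_hasDerivAt s (hγ.normalize hne)).congr_deriv ?_
  rw [← inner_gradient_left, sphericalGradient]
  simp only [inner_sub_left, inner_sub_right, real_inner_smul_left, real_inner_smul_right]
  ring

variable {f fp : E → ℝ} {p : ℕ}

theorem tendsto_inv_norm_pow_smul_gradient_sub_gradient_normalize (hp : 1 ≤ p)
    (hf : AnalyticAt ℝ f 0) (hfp : AnalyticOnNhd ℝ fp univ)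
    (hom : ∀ (t : ℝ) (x : E), fp (t • x) = t ^ p * fp x)
    (hlead : (fun x => f x - fp x) =O[𝓝 0] fun x => ‖x‖ ^ (p + 1)) :
    Tendsto (fun x => (‖x‖ ^ (p - 1))⁻¹ • gradient f x - gradient fp (NormedSpace.normalize x))
      (𝓝[≠] 0) (𝓝 0) := by
  have hdiff : (fun x => gradient f x - gradient fp x) =O[𝓝 0] fun x => ‖x‖ ^ p := by
    refine ((hf.sub (hfp 0 trivial)).gradient_isBigO_of_isBigO hlead).congr' ?_ .rfl
    filter_upwards [hf.eventually_analyticAt] with x hx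
    exact gradient_sub hx.differentiableAt (hfp x trivial).differentiableAt
  have hscaled : (fun x => (‖x‖ ^ (p - 1))⁻¹ • (gradient f x - gradient fp x)) =O[𝓝[≠] 0]
      fun x => (‖x‖ ^ (p - 1))⁻¹ • ‖x‖ ^ p :=
    (isBigO_refl _ _).smul (hdiff.mono nhdsWithin_le_nhds)
  have hnorm : Tendsto (fun x : E => (‖x‖ ^ (p - 1))⁻¹ • ‖x‖ ^ p) (𝓝[≠] 0) (𝓝 0) := by
    refine (tendsto_norm_zero.mono_left nhdsWithin_le_nhds).congr' ?_
    filter_upwards [self_mem_nhdsWithin] with x hx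
    have hx' : ‖x‖ ^ (p - 1) ≠ 0 := pow_ne_zero _ (norm_ne_zero_iff.mpr hx)
    rw [smul_eq_mul, ← pow_sub_one_mul (show p ≠ 0 by omega), inv_mul_cancel_left₀ hx']
  refine (hscaled.trans_tendsto hnorm).congr' ?_
  filter_upwards [self_mem_nhdsWithin] with x hx
  have hx' : ‖x‖ ≠ 0 := norm_ne_zero_iff.mpr hx
  have hgrad : gradient fp x = ‖x‖ ^ (p - 1) • gradient fp (NormedSpace.normalize x) := by
    conv_lhs => rw [← NormedSpace.norm_smul_normalize x]
    exact gradient_smul_of_homogeneous (differentiableOn_univ.mp hfp.differentiableOn) hom hp hx' _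
  rw [smul_sub, hgrad, inv_smul_smul₀ (pow_ne_zero _ hx')]

theorem tendsto_normalize_gradient_of_tendsto_normalize {α : Type*} {l : Filter α} {γ : α → E}
    {ν : E} (hp : 1 ≤ p) (hf : AnalyticAt ℝ f 0) (hfp : AnalyticOnNhd ℝ fp univ)
    (hom : ∀ (t : ℝ) (x : E), fp (t • x) = t ^ p * fp x)
    (hlead : (fun x => f x - fp x) =O[𝓝 0] fun x => ‖x‖ ^ (p + 1))
    (hγ : Tendsto γ l (𝓝[≠] 0)) (hν : Tendsto (fun a => NormedSpace.normalize (γ a)) l (𝓝 ν))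
    (hgrad : gradient fp ν ≠ 0) :
    Tendsto (fun a => NormedSpace.normalize (gradient f (γ a))) l
      (𝓝 (NormedSpace.normalize (gradient fp ν))) := by
  have hscaled : Tendsto (fun a => (‖γ a‖ ^ (p - 1))⁻¹ • gradient f (γ a)) l
      (𝓝 (gradient fp ν)) := by
    simpa using
      ((tendsto_inv_norm_pow_smul_gradient_sub_gradient_normalize hp hf hfp hom hlead).comp hγ).add
        ((hfp.gradient ν trivial).continuousAt.tendsto.comp hν)
  refine ((continuousAt_normalize hgrad).tendsto.comp hscaled).congr' ?_
  filter_upwards [hγ self_mem_nhdsWithin] with a ha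
  exact NormedSpace.normalize_smul_of_pos (inv_pos.mpr (pow_pos (norm_pos_iff.mpr ha) _)) _

theorem tendsto_inner_sphericalGradient_normalize_gradient {α : Type*} {l : Filter α}
    {γ : α → E} {ν : E} (hp : 1 ≤ p) (hf : AnalyticAt ℝ f 0) (hfp : AnalyticOnNhd ℝ fp univ)
    (hom : ∀ (t : ℝ) (x : E), fp (t • x) = t ^ p * fp x)
    (hlead : (fun x => f x - fp x) =O[𝓝 0] fun x => ‖x‖ ^ (p + 1))
    (hγ : Tendsto γ l (𝓝[≠] 0)) (hν1 : ‖ν‖ = 1)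
    (hν : Tendsto (fun a => NormedSpace.normalize (γ a)) l (𝓝 ν)) (hgrad : gradient fp ν ≠ 0) :
    Tendsto (fun a => ⟪sphericalGradient fp (NormedSpace.normalize (γ a)),
        NormedSpace.normalize (gradient f (γ a))⟫) l
      (𝓝 (‖sphericalGradient fp ν‖ ^ 2 / ‖gradient fp ν‖)) := by
  have hlim := Tendsto.inner (𝕜 := ℝ)
    ((continuous_sphericalGradient hfp.gradient.continuous).tendsto ν |>.comp hν)
    (tendsto_normalize_gradient_of_tendsto_normalize hp hf hfp hom hlead hγ hν hgrad)
  rwa [NormedSpace.normalize, real_inner_smul_right, inner_sphericalGradient_gradient hν1,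
    ← div_eq_inv_mul] at hlim

theorem sphericalGradient_eq_zero_of_tendsto_normalize (hp : 1 ≤ p) (hf : AnalyticAt ℝ f 0)
    (hfp : AnalyticOnNhd ℝ fp univ) (hom : ∀ (t : ℝ) (x : E), fp (t • x) = t ^ p * fp x)
    (hlead : (fun x => f x - fp x) =O[𝓝 0] fun x => ‖x‖ ^ (p + 1))
    {γ : ℝ → E} {L : ℝ} {ν : E}
    (hγ : ∀ᶠ s in 𝓝[<] L, HasDerivAt γ (NormedSpace.normalize (gradient f (γ s))) s)
    (hγ0 : Tendsto γ (𝓝[<] L) (𝓝 0)) (hν1 : ‖ν‖ = 1)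
    (hν : Tendsto (fun s => NormedSpace.normalize (γ s)) (𝓝[<] L) (𝓝 ν)) :
    sphericalGradient fp ν = 0 := by
  by_contra hW
  have hgrad : gradient fp ν ≠ 0 := fun h => hW (by simp [sphericalGradient, h])
  have hγne : ∀ᶠ s in 𝓝[<] L, γ s ≠ 0 := by
    filter_upwards [hν.eventually_ne (norm_ne_zero_iff.mp (by simp [hν1]))] with s hs
    exact (NormedSpace.normalize_eq_zero_iff _).not.mp hs
  set κ := ‖sphericalGradient fp ν‖ ^ 2 / ‖gradient fp ν‖
  have hκ : 0 < κ := by positivity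
  have hslope := tendsto_inner_sphericalGradient_normalize_gradient hp hf hfp hom hlead
    (tendsto_nhdsWithin_iff.mpr ⟨hγ0, hγne⟩) hν1 hν hgrad
  have hdist := eventually_norm_sub_le_of_tendsto_nhdsLT hγ
    (.of_forall fun s => norm_normalize_le_one _) hγ0
  have hΦ : Tendsto (fun s => fp (NormedSpace.normalize (γ s))) (𝓝[<] L) atTop := by
    refine tendsto_atTop_of_div_sub_le_deriv (half_pos hκ)
      ((hγ.and hγne).mono fun s hs => hs.1.comp_normalize (hfp _ trivial).differentiableAt hs.2) ?_
    filter_upwards [hslope.eventually (lt_mem_nhds (half_lt_self hκ)), hdist, hγne,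
      self_mem_nhdsWithin] with s hslope hdist hne hs
    have hr : 0 < ‖γ s‖ := norm_pos_iff.mpr hne
    calc κ / 2 / (L - s) ≤ κ / 2 / ‖γ s‖ :=
          div_le_div_of_nonneg_left (by positivity) hr (by simpa using hdist)
      _ ≤ ‖γ s‖⁻¹ * _ := by
          rw [div_eq_inv_mul]
          gcongr
  exact not_tendsto_nhds_of_tendsto_atTop hΦ _ ((hfp ν trivial).continuousAt.tendsto.comp hν)

end InnerProductSpace

theorem secant_limit_is_eigenvector_of_leading_part_hessian_general
    {n : ℕ}
    (U : Set (EuclideanSpace ℝ (Fin n)))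
    (hOU : (0 : EuclideanSpace ℝ (Fin n)) ∈ U)
    (f : EuclideanSpace ℝ (Fin n) → ℝ)
    (hfan : AnalyticOnNhd ℝ f U)
    (L : ℝ) (hL : 0 < L)
    (γ : ℝ → EuclideanSpace ℝ (Fin n))
    (hγode : ∀ s ∈ Set.Ico (0 : ℝ) L,
      HasDerivAt γ (‖gradient f (γ s)‖⁻¹ • gradient f (γ s)) s)
    (hγlim : Tendsto γ (𝓝[<] L) (𝓝 0))
    (p : ℕ) (hp : 2 ≤ p)
    (fp : EuclideanSpace ℝ (Fin n) → ℝ)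
    (hfpan : AnalyticOnNhd ℝ fp Set.univ)
    (hfphom : ∀ (t : ℝ) (x : EuclideanSpace ℝ (Fin n)), fp (t • x) = t ^ p * fp x)
    (hlead : (fun x => f x - fp x) =O[𝓝 (0 : EuclideanSpace ℝ (Fin n))]
      fun x => ‖x‖ ^ (p + 1))
    (ν : EuclideanSpace ℝ (Fin n)) (hν1 : ‖ν‖ = 1)
    (hνlim : Tendsto (fun s => ‖γ s‖⁻¹ • γ s) (𝓝[<] L) (𝓝 ν))
    :
    ∃ lam : ℝ, fderiv ℝ (gradient fp) ν ν = lam • ν := by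
  have hW : sphericalGradient fp ν = 0 :=
    sphericalGradient_eq_zero_of_tendsto_normalize (by omega) (hfan 0 hOU) hfpan hfphom hlead
      (mem_of_superset (Ico_mem_nhdsLT hL) hγode) hγlim hν1 hνlim
  refine ⟨((p - 1 : ℕ) : ℝ) * ⟪gradient fp ν, ν⟫, ?_⟩
  rw [fderiv_gradient_apply_self_of_homogeneous hfpan hfphom (by omega), mul_smul,
    ← sub_eq_zero.mp hW]

/-- the limit of secants of a gradient trajectory is an eigen-vector of the Hessian
of the leading homogeneous part `f_p` at `ν`. -/
theorem secant_limit_is_eigenvector_of_leading_part_hessian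
    {n : ℕ} (hn : 2 ≤ n)
    (U : Set (EuclideanSpace ℝ (Fin n))) (hUopen : IsOpen U)
    (hOU : (0 : EuclideanSpace ℝ (Fin n)) ∈ U)
    (f : EuclideanSpace ℝ (Fin n) → ℝ)
    (hfan : AnalyticOnNhd ℝ f U) (hf0 : f 0 = 0) (hgf0 : gradient f 0 = 0)
    (L : ℝ) (hL : 0 < L)
    (γ : ℝ → EuclideanSpace ℝ (Fin n))
    (hγU : ∀ s ∈ Set.Ico (0 : ℝ) L, γ s ∈ U)
    (hγreg : ∀ s ∈ Set.Ico (0 : ℝ) L, gradient f (γ s) ≠ 0)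
    (hγode : ∀ s ∈ Set.Ico (0 : ℝ) L,
      HasDerivAt γ (‖gradient f (γ s)‖⁻¹ • gradient f (γ s)) s)
    (hfneg : f (γ 0) < 0)
    (hfmono : StrictMonoOn (fun s => f (γ s)) (Set.Ico (0 : ℝ) L))
    (hγlim : Tendsto γ (𝓝[<] L) (𝓝 0))
    (p : ℕ) (hp : 2 ≤ p)
    (fp : EuclideanSpace ℝ (Fin n) → ℝ)
    (hfpan : AnalyticOnNhd ℝ fp Set.univ)
    (hfphom : ∀ (t : ℝ) (x : EuclideanSpace ℝ (Fin n)), fp (t • x) = t ^ p * fp x)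
    (hfpne : ∃ x, fp x ≠ 0)
    (hlead : (fun x => f x - fp x) =O[𝓝 (0 : EuclideanSpace ℝ (Fin n))]
      fun x => ‖x‖ ^ (p + 1))
    (ν : EuclideanSpace ℝ (Fin n)) (hν1 : ‖ν‖ = 1)
    (hνlim : Tendsto (fun s => ‖γ s‖⁻¹ • γ s) (𝓝[<] L) (𝓝 ν))
    :
    ∃ lam : ℝ, fderiv ℝ (gradient fp) ν ν = lam • ν :=
  secant_limit_is_eigenvector_of_leading_part_hessian_general U hOU f hfan L hL γ hγode hγlim p hp
    fp hfpan hfphom hlead ν hν1 hνlim
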